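/- Let 0 ≤ A ≤ I and Z > 0 with extremal eigenvalues a ≥ b > 0. Then AZA ≤ ((a+b)²/(4ab))·Z in the Loewner order. -/

import Mathlib

/-!
Kantorovich's operator inequality `Z + ab Z⁻¹ ≤ (a + b) I` (on the spectrum it is
`(a - x)(x - b)/x ≥ 0`), conjugated by `A`, gives
`AZA ≤ (a + b) A² - ab AZ⁻¹A ≤ (a + b) A - ab AZ⁻¹A`, using `A² ≤ A`. The last expression is at
most `(a + b)²/(4ab) Z` because the difference is `(ab)⁻¹ X Z⁻¹ X ≥ 0` for
`X = ab A - (a + b)/2 Z`.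
-/

open Matrix ComplexOrder
open scoped MatrixOrder

lemma mul_self_le_self_of_nonneg_of_le_one {R : Type*} [Ring R] [StarRing R] [PartialOrder R]
    [StarOrderedRing R] {a : R} (h₀ : 0 ≤ a) (h₁ : a ≤ 1) : a * a ≤ a := by
  have hdecomp : a - a * a = (1 - a) * a * (1 - a) + a * (1 - a) * a := by noncomm_ring
  rw [← sub_nonneg, hdecomp]
  exact add_nonneg (conjugate_nonneg_of_nonneg h₀ (sub_nonneg.2 h₁))
    (conjugate_nonneg_of_nonneg (sub_nonneg.2 h₁) h₀)

namespace Matrix.PosDef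

variable {n 𝕜 : Type*} [RCLike 𝕜] [Fintype n] [DecidableEq n] {Z : Matrix n n 𝕜}

lemma add_smul_inv_le_smul_one (hZ : Z.PosDef) {a b : ℝ}
    (hlb : ∀ i, b ≤ hZ.1.eigenvalues i) (hub : ∀ i, hZ.1.eigenvalues i ≤ a) :
    Z + (a * b) • Z⁻¹ ≤ (a + b) • 1 := by
  have hcont (f : ℝ → ℝ) : ContinuousOn f (spectrum ℝ Z) := Z.finite_real_spectrum.continuousOn f
  have hcfc : cfc (fun x : ℝ => x + a * b * x⁻¹) Z = Z + (a * b) • Z⁻¹ := by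
    rw [cfc_add _ _ _ (hcont _) (hcont _), cfc_id' ℝ Z, cfc_const_mul _ _ _ (hcont _),
      cfc_ringInverse_id Z hZ.isUnit, nonsing_inv_eq_ringInverse]
  rw [← hcfc, ← Algebra.algebraMap_eq_smul_one]
  refine cfc_le_algebraMap _ _ _ (fun x hx => ?_) (hcont _)
  obtain ⟨i, rfl⟩ := hZ.1.spectrum_real_eq_range_eigenvalues ▸ hx
  set x := hZ.1.eigenvalues i
  have hx₀ : 0 < x := hZ.eigenvalues_pos i
  have hgap : a + b - (x + a * b * x⁻¹) = (a - x) * (x - b) / x := by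
    field_simp
    ring
  rw [← sub_nonneg, hgap]
  exact div_nonneg (mul_nonneg (sub_nonneg.2 (hub i)) (sub_nonneg.2 (hlb i))) hx₀.le

lemma smul_sub_smul_mul_inv_mul_le (hZ : Z.PosDef) {A : Matrix n n 𝕜} (hA : A.IsHermitian)
    {s : ℝ} (hs : 0 < s) (t : ℝ) :
    t • A - s • (A * Z⁻¹ * A) ≤ (t ^ 2 / (4 * s)) • Z := by
  set X : Matrix n n 𝕜 := s • A - (t / 2) • Z
  have hX : IsSelfAdjoint X :=
    ((IsSelfAdjoint.all s).smul hA.isSelfAdjoint).sub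
      ((IsSelfAdjoint.all _).smul hZ.1.isSelfAdjoint)
  have hdet : IsUnit Z.det := (isUnit_iff_isUnit_det Z).mp hZ.isUnit
  have hsq : (t ^ 2 / (4 * s)) • Z - (t • A - s • (A * Z⁻¹ * A)) = s⁻¹ • (X * Z⁻¹ * X) := by
    simp only [X, sub_mul, mul_sub, smul_mul_assoc, mul_smul_comm, Matrix.mul_assoc,
      nonsing_inv_mul Z hdet, Matrix.mul_one]
    simp only [← Matrix.mul_assoc, mul_nonsing_inv Z hdet, Matrix.one_mul, smul_sub, smul_smul]
    match_scalars <;> field_simp <;> ring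
  rw [← sub_nonneg, hsq]
  exact smul_nonneg (inv_nonneg.2 hs.le) (hX.conjugate_nonneg hZ.inv.posSemidef.nonneg)

end Matrix.PosDef

theorem AZA_le_kantorovich_Z {n : ℕ} (A Z : Matrix (Fin n) (Fin n) ℂ)
    (hA : A.PosSemidef) (hAI : ((1 : Matrix (Fin n) (Fin n) ℂ) - A).PosSemidef)
    (hZ : Z.PosDef) (a b : ℝ)
    (ha : IsGreatest (Set.range hZ.1.eigenvalues) a)
    (hb : IsLeast (Set.range hZ.1.eigenvalues) b) :
    ((((a + b) ^ 2 / (4 * a * b) : ℝ) : ℂ) • Z - A * Z * A).PosSemidef := by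
  obtain ⟨i₀, hi₀⟩ := hb.1
  have hb₀ : 0 < b := hi₀ ▸ hZ.eigenvalues_pos i₀
  have ha₀ : 0 < a := hb₀.trans_le (hb.2 ha.1)
  have hlb : ∀ i, b ≤ hZ.1.eigenvalues i := fun i => hb.2 ⟨i, rfl⟩
  have hub : ∀ i, hZ.1.eigenvalues i ≤ a := fun i => ha.2 ⟨i, rfl⟩
  have hkant := hA.1.isSelfAdjoint.conjugate_le_conjugate (hZ.add_smul_inv_le_smul_one hlb hub)
  simp only [mul_add, add_mul, mul_smul_comm, smul_mul_assoc, Matrix.mul_one] at hkant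
  rw [Complex.coe_smul, ← le_iff]
  calc A * Z * A ≤ (a + b) • (A * A) - (a * b) • (A * Z⁻¹ * A) := le_sub_iff_add_le.mpr hkant
    _ ≤ (a + b) • A - (a * b) • (A * Z⁻¹ * A) := by
      gcongr
      exact mul_self_le_self_of_nonneg_of_le_one hA.nonneg (sub_nonneg.mp hAI.nonneg)
    _ ≤ ((a + b) ^ 2 / (4 * (a * b))) • Z :=
      hZ.smul_sub_smul_mul_inv_mul_le hA.1 (mul_pos ha₀ hb₀) _
    _ = ((a + b) ^ 2 / (4 * a * b)) • Z := by rw [mul_assoc]
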